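/- arXiv:1807.00800 — 2 statements merged into one kernel-verified Lean document; each statement's English description precedes it below -/
import Mathlib

section
/- Let n ≥ 1 and let U' be a 2^n × 2^n unitary matrix. Let U₂ := I_{2^n} ⊗ |0⟩⟨0| + U' ⊗ |1⟩⟨1| be the controlled-U' unitary on n + 1 qubits, with qubit n + 1 the control. Then the local Hilbert-Schmidt cost on the control qubit, with the trainable unitary taken to be the identity, satisfies C_LHST^{(n+1)}(U₂, I) = 1/2 − Re(Tr(U'))/2^{n+1}. -/
open Matrix Kronecker Complex

noncomputable section

/-- The Hilbert-Schmidt test cost `C_HST(U,V) = 1 - |Tr(V†U)|²/d²` for `d × d` matrices. -/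
def CHSTd (d : ℕ) (U V : Matrix (Fin d) (Fin d) ℂ) : ℝ :=
  1 - ‖(Vᴴ * U).trace‖ ^ 2 / (d : ℝ) ^ 2

/-- The Hilbert-Schmidt test cost for unitaries on `n` qubits (`d = 2^n`). -/
def CHST (n : ℕ) (U V : Matrix (Fin n → Fin 2) (Fin n → Fin 2) ℂ) : ℝ :=
  1 - ‖(Vᴴ * U).trace‖ ^ 2 / ((2 : ℝ) ^ n) ^ 2

/-- The local channel `E_j(ρ) = Tr_{j̄}[ W (ρ_(j) ⊗ I/2^(n-1)) W† ]`, where `ρ` is placed on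
qubit `j`, the maximally mixed state on the other qubits, and the partial trace is over all
qubits except `j`.  (The sum over `r` double-counts the assignments of the qubits other than
`j`, whence the extra factor `1/2`.) -/
def Ej (n : ℕ) (j : Fin n) (W : Matrix (Fin n → Fin 2) (Fin n → Fin 2) ℂ)
    (ρ : Matrix (Fin 2) (Fin 2) ℂ) : Matrix (Fin 2) (Fin 2) ℂ :=
  Matrix.of fun a b =>
    (1 / 2 ^ (n - 1) : ℂ) * (1 / 2) *
      ∑ r : Fin n → Fin 2, ∑ s : Fin n → Fin 2, ∑ t : Fin n → Fin 2,
        (if Function.update s j 0 = Function.update t j 0 then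
          W (Function.update r j a) s * ρ (s j) (t j) * star (W (Function.update r j b) t)
        else 0)

/-- The two-qubit maximally entangled state `|Φ₂⁺⟩ = (|00⟩+|11⟩)/√2`. -/
def phi2 : (Fin 2 × Fin 2) → ℂ := fun p => if p.1 = p.2 then ((1 / Real.sqrt 2 : ℝ) : ℂ) else 0

/-- The projector `|Φ₂⁺⟩⟨Φ₂⁺|`. -/
def phi2Proj : Matrix (Fin 2 × Fin 2) (Fin 2 × Fin 2) ℂ :=
  Matrix.of fun p q => if p.1 = p.2 ∧ q.1 = q.2 then (1 / 2 : ℂ) else 0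

/-- `(E ⊗ id)(ρ)` for a map `E` on one-qubit matrices and a two-qubit matrix `ρ`. -/
def tensorId (E : Matrix (Fin 2) (Fin 2) ℂ → Matrix (Fin 2) (Fin 2) ℂ)
    (ρ : Matrix (Fin 2 × Fin 2) (Fin 2 × Fin 2) ℂ) :
    Matrix (Fin 2 × Fin 2) (Fin 2 × Fin 2) ℂ :=
  Matrix.of fun p q => ∑ a : Fin 2, ∑ b : Fin 2,
    ρ (a, p.2) (b, q.2) * E (Matrix.single a b 1) p.1 q.1

/-- The entanglement fidelity `F_e^(j) = ⟨Φ₂⁺|(E_j ⊗ id)(|Φ₂⁺⟩⟨Φ₂⁺|)|Φ₂⁺⟩`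
(as a complex number), with `W = U V†`. -/
def FeC (n : ℕ) (j : Fin n) (U V : Matrix (Fin n → Fin 2) (Fin n → Fin 2) ℂ) : ℂ :=
  star phi2 ⬝ᵥ (tensorId (Ej n j (U * Vᴴ)) phi2Proj).mulVec phi2

/-- The entanglement fidelity `F_e^(j)` (a real number). -/
def Fe (n : ℕ) (j : Fin n) (U V : Matrix (Fin n → Fin 2) (Fin n → Fin 2) ℂ) : ℝ :=
  (FeC n j U V).re

/-- The local Hilbert-Schmidt cost for qubit `j`: `C_LHST^(j)(U,V) = 1 - F_e^(j)`. -/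
def CLHSTj (n : ℕ) (j : Fin n) (U V : Matrix (Fin n → Fin 2) (Fin n → Fin 2) ℂ) : ℝ :=
  1 - Fe n j U V

/-- The local Hilbert-Schmidt cost `C_LHST(U,V) = (1/n) Σ_j C_LHST^(j)(U,V)`. -/
def CLHST (n : ℕ) (U V : Matrix (Fin n → Fin 2) (Fin n → Fin 2) ℂ) : ℝ :=
  (1 / n : ℝ) * ∑ j : Fin n, CLHSTj n j U V

end

noncomputable section

/-- The controlled-`U'` unitary `I ⊗ |0⟩⟨0| + U' ⊗ |1⟩⟨1|` on `n + 1` qubits, with qubit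
`n + 1` (the last qubit) the control: it acts as the identity on the first `n` qubits
when the control is `|0⟩` and as `U'` when the control is `|1⟩`. -/
def ctrlLast (n : ℕ) (U' : Matrix (Fin n → Fin 2) (Fin n → Fin 2) ℂ) :
    Matrix (Fin (n + 1) → Fin 2) (Fin (n + 1) → Fin 2) ℂ :=
  Matrix.of fun s t =>
    if s (Fin.last n) = t (Fin.last n) then
      (if s (Fin.last n) = 0 then
        (if (fun i : Fin n => s i.castSucc) = (fun i : Fin n => t i.castSucc) then 1 else 0)
      else U' (fun i : Fin n => s i.castSucc) (fun i : Fin n => t i.castSucc))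
    else 0

/-!
With `V = I` the channel is `E(ρ)` built from `W = U₂` itself, and the fidelity with `|Φ₂⁺⟩`
is `¼ Σ_{x,y} ⟨x|E(|x⟩⟨y|)|y⟩`. On the control qubit, `U₂` is block diagonal with blocks
`M₀ = I` and `M₁ = U'`, so `⟨x|E(|x⟩⟨y|)|y⟩ = 2⁻ⁿ Tr(M_x M_y†)`. Summing the four terms gives
`(2·2ⁿ + Tr U' + conj (Tr U')) / 2ⁿ⁺²`, using `Tr(U'U'†) = 2ⁿ`.
-/

theorem Fintype.sum_fin_succ_fun_eq_sum_snoc {α M : Type*} [Fintype α] [AddCommMonoid M]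
    (n : ℕ) (f : (Fin (n + 1) → α) → M) :
    ∑ s, f s = ∑ c, ∑ s' : Fin n → α, f (Fin.snoc s' c) := by
  rw [← Fintype.sum_prod_type']
  exact (Fintype.sum_equiv (Fin.snocEquiv fun _ => α) _ _ fun _ => rfl).symm

theorem Matrix.trace_mul_conjTranspose {m k R : Type*} [Fintype m] [Fintype k]
    [NonUnitalSemiring R] [Star R] (A B : Matrix m k R) :
    (A * Bᴴ).trace = ∑ i, ∑ j, A i j * star (B i j) := by
  simp [Matrix.trace, Matrix.mul_apply]

theorem star_phi2_dotProduct_tensorId_mulVec_phi2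
    (E : Matrix (Fin 2) (Fin 2) ℂ → Matrix (Fin 2) (Fin 2) ℂ) :
    star phi2 ⬝ᵥ (tensorId E phi2Proj).mulVec phi2 =
      (1 / 4) * ∑ a : Fin 2, ∑ b : Fin 2, E (Matrix.single a b 1) a b := by
  have hsq : ((Real.sqrt 2 : ℝ) : ℂ) ^ 2 = 2 := by
    rw [← Complex.ofReal_pow, Real.sq_sqrt zero_le_two]; norm_num
  simp only [dotProduct, Matrix.mulVec, tensorId, phi2, phi2Proj, Matrix.of_apply,
    Pi.star_apply, Fintype.sum_prod_type, Fin.sum_univ_two]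
  norm_num [Complex.star_def, Complex.conj_ofReal]
  field_simp
  ring_nf
  rw [hsq]; ring

theorem Ej_last_single_apply (n : ℕ) (W : Matrix (Fin (n + 1) → Fin 2) (Fin (n + 1) → Fin 2) ℂ)
    (x y a b : Fin 2) :
    Ej (n + 1) (Fin.last n) W (Matrix.single x y 1) a b =
      (1 / 2 ^ n) * ∑ r : Fin n → Fin 2, ∑ s : Fin n → Fin 2,
        W (Fin.snoc r a) (Fin.snoc s x) * star (W (Fin.snoc r b) (Fin.snoc s y)) := by
  simp only [Ej, Matrix.of_apply, Fintype.sum_fin_succ_fun_eq_sum_snoc]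
  simp only [Fin.update_snoc_last, Fin.snoc_last, Fin.snoc_inj, Matrix.single, Matrix.of_apply]
  simp [ite_and, Finset.sum_ite_eq]
  ring

theorem ctrlLast_snoc_snoc (n : ℕ) (U' : Matrix (Fin n → Fin 2) (Fin n → Fin 2) ℂ)
    (r s : Fin n → Fin 2) (c : Fin 2) :
    ctrlLast n U' (Fin.snoc r c) (Fin.snoc s c) = (if c = 0 then 1 else U') r s := by
  split_ifs with hc <;> simp [ctrlLast, hc, Matrix.one_apply]

theorem FeC_ctrlLast_one (n : ℕ) (U' : Matrix (Fin n → Fin 2) (Fin n → Fin 2) ℂ) :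
    FeC (n + 1) (Fin.last n) (ctrlLast n U') 1 =
      (1 / 4) * (1 / 2 ^ n) *
        (2 ^ n + star U'.trace + U'.trace + (U' * U'ᴴ).trace) := by
  simp only [FeC, conjTranspose_one, mul_one, star_phi2_dotProduct_tensorId_mulVec_phi2,
    Ej_last_single_apply, ctrlLast_snoc_snoc, ← Matrix.trace_mul_conjTranspose, Fin.sum_univ_two]
  simp only [Fin.isValue, ↓reduceIte, one_ne_zero, conjTranspose_one, mul_one, one_mul,
    trace_one, Fintype.card_fun, Fintype.card_fin, trace_conjTranspose, Nat.cast_pow,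
    Nat.cast_ofNat]
  ring

theorem Fe_ctrlLast_one (n : ℕ) {U' : Matrix (Fin n → Fin 2) (Fin n → Fin 2) ℂ}
    (hU' : U' ∈ Matrix.unitaryGroup (Fin n → Fin 2) ℂ) :
    Fe (n + 1) (Fin.last n) (ctrlLast n U') 1 = 1 / 2 + U'.trace.re / 2 ^ (n + 1) := by
  have hUU : U' * U'ᴴ = 1 := Matrix.mem_unitaryGroup_iff.mp hU'
  have hre : star U'.trace + U'.trace = 2 * U'.trace.re := by
    rw [add_comm, Complex.star_def, Complex.add_conj, Complex.ofReal_mul, Complex.ofReal_ofNat]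
  have hFeC : FeC (n + 1) (Fin.last n) (ctrlLast n U') 1 =
      ((1 / 2 + U'.trace.re / 2 ^ (n + 1) : ℝ) : ℂ) := by
    rw [FeC_ctrlLast_one, hUU]
    simp only [trace_one, Fintype.card_fun, Fintype.card_fin, Nat.cast_pow, Nat.cast_ofNat]
    push_cast
    field_simp
    linear_combination 2 * 2 ^ (n + 1) * hre
  rw [Fe, hFeC, Complex.ofReal_re]

theorem stmt17_general (n : ℕ)
    (U' : Matrix (Fin n → Fin 2) (Fin n → Fin 2) ℂ)
    (hU' : U' ∈ Matrix.unitaryGroup (Fin n → Fin 2) ℂ) :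
    CLHSTj (n + 1) (Fin.last n) (ctrlLast n U') 1 =
      1 / 2 - (U'.trace).re / 2 ^ (n + 1) := by
  rw [CLHSTj, Fe_ctrlLast_one n hU']
  ring

/-- For a unitary `U'` on `n ≥ 1` qubits and `U₂` the controlled-`U'`
on `n + 1` qubits with the last qubit the control, the local Hilbert-Schmidt cost on the
control qubit (trainable unitary the identity) is
`C_LHST^(n+1)(U₂, I) = 1/2 − Re(Tr U')/2^(n+1)`. -/
theorem stmt17 (n : ℕ) (hn : 1 ≤ n)
    (U' : Matrix (Fin n → Fin 2) (Fin n → Fin 2) ℂ)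
    (hU' : U' ∈ Matrix.unitaryGroup (Fin n → Fin 2) ℂ) :
    CLHSTj (n + 1) (Fin.last n) (ctrlLast n U') 1 =
      1 / 2 - (U'.trace).re / 2 ^ (n + 1) :=
  stmt17_general n U' hU'

end
end

section
/- Let n ≥ 1 and let U' be a 2^n × 2^n unitary matrix. Set U₁ := U' (acting on n qubits) and U₂ := I_{2^n} ⊗ |0⟩⟨0| + U' ⊗ |1⟩⟨1| (the controlled-U' on n + 1 qubits with control qubit n + 1). Define B(U₁) := 1 − C_LHST(U₁, I_{2^n}) and B(U₂) := 1 − C_LHST(U₂, I_{2^{n+1}}). Then Re(Tr(U')) = 2^n · ( (n+1)(2B(U₂) − 1) − n·B(U₁) ); hence the real part of the trace of U' is recovered exactly from two evaluations of the local Hilbert-Schmidt cost. -/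
open Matrix Kronecker Complex

noncomputable section

/-! For `V = 1` the entanglement fidelity of qubit `j` is `‖Tr_j U‖²_HS / 2^(m+1)`, where `Tr_j` is
the partial trace over qubit `j`. Splitting off the control qubit, `U₂ = diag(1, U')`. Tracing out a
target qubit `i` gives `diag(2 • 1, Tr_i U')`, so that qubit has fidelity `(1 + F_e^(i)(U'))/2`;
tracing out the control gives `1 + U'`, whose squared Hilbert-Schmidt norm is
`2 · 2^n + 2 Re Tr U'` by unitarity. Summed over all qubits, the target contributions cancel
against `n · B(U₁)` and only `Re Tr U'` survives. -/

section HilbertSchmidt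

variable {m n o : Type*} [Fintype m] [Fintype n] [Fintype o]

def frobeniusNormSq (A : Matrix m n ℂ) : ℝ :=
  ∑ i, ∑ j, Complex.normSq (A i j)

lemma frobeniusNormSq_eq_re_trace (A : Matrix m n ℂ) :
    frobeniusNormSq A = (Aᴴ * A).trace.re := by
  simp only [frobeniusNormSq, trace, diag, mul_apply, conjTranspose_apply, re_sum]
  rw [Finset.sum_comm]
  refine Fintype.sum_congr _ _ fun j => Fintype.sum_congr _ _ fun i => ?_
  rw [mul_comm, Complex.star_def, Complex.mul_conj, Complex.ofReal_re]

lemma frobeniusNormSq_submatrix {m' n' : Type*} [Fintype m'] [Fintype n'] (A : Matrix m n ℂ)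
    (e : m' ≃ m) (f : n' ≃ n) : frobeniusNormSq (A.submatrix e f) = frobeniusNormSq A := by
  simp only [frobeniusNormSq, submatrix_apply]
  rw [← e.sum_comp (fun i => ∑ j, Complex.normSq (A i j))]
  exact Fintype.sum_congr _ _ fun i => f.sum_comp (fun j => Complex.normSq (A (e i) j))

lemma frobeniusNormSq_blockDiagonal [DecidableEq o] (M : o → Matrix m n ℂ) :
    frobeniusNormSq (blockDiagonal M) = ∑ k, frobeniusNormSq (M k) := by
  simp only [frobeniusNormSq, Fintype.sum_prod_type, blockDiagonal_apply,
    apply_ite Complex.normSq, Complex.normSq_zero]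
  simp only [Finset.sum_ite_eq, Finset.mem_univ, if_true]
  exact Finset.sum_comm

lemma frobeniusNormSq_smul_one [DecidableEq m] (c : ℂ) :
    frobeniusNormSq (c • (1 : Matrix m m ℂ)) = Complex.normSq c * Fintype.card m := by
  simp [frobeniusNormSq, one_apply, apply_ite Complex.normSq, mul_comm]

lemma frobeniusNormSq_one_add_of_mem_unitaryGroup [DecidableEq m] {U : Matrix m m ℂ}
    (hU : U ∈ unitaryGroup m ℂ) :
    frobeniusNormSq (1 + U) = 2 * Fintype.card m + 2 * U.trace.re := by
  have hUU : Uᴴ * U = 1 := hU.1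
  rw [frobeniusNormSq_eq_re_trace, conjTranspose_add, conjTranspose_one, add_mul, mul_add,
    mul_add, hUU, one_mul, mul_one]
  simp only [one_mul, trace_add, trace_one, trace_conjTranspose, RCLike.star_def, add_re,
    natCast_re, conj_re]
  ring

end HilbertSchmidt

section PartialTrace

variable {α R : Type*} {k : ℕ}

def snocSplit : (Fin (k + 1) → α) ≃ (Fin k → α) × α :=
  (Fin.snocEquiv fun _ => α).symm.trans (Equiv.prodComm _ _)

@[simp] lemma snocSplit_symm_apply (x : Fin k → α) (a : α) :
    snocSplit.symm (x, a) = (Fin.snoc x a : Fin (k + 1) → α) := rfl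

@[simp] lemma snocSplit_snoc (x : Fin k → α) (a : α) :
    snocSplit (Fin.snoc x a : Fin (k + 1) → α) = (x, a) := by
  simp [snocSplit]

lemma insertNth_castSucc_snoc (i : Fin (k + 1)) (c a : α) (x : Fin k → α) :
    (i.castSucc.insertNth c (Fin.snoc x a : Fin (k + 1) → α) : Fin (k + 2) → α) =
      Fin.snoc (i.insertNth c x : Fin (k + 1) → α) a := by
  ext j
  induction j using Fin.lastCases with
  | last =>
    rw [Fin.snoc_last, ← Fin.succAbove_ne_last_last (Fin.castSucc_ne_last i),
      Fin.insertNth_apply_succAbove, Fin.snoc_last]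
  | cast j =>
    rw [Fin.snoc_castSucc]
    induction j using i.succAboveCases with
    | x => rw [Fin.insertNth_apply_same, Fin.insertNth_apply_same]
    | p j =>
      rw [← Fin.castSucc_succAbove_castSucc, Fin.insertNth_apply_succAbove,
        Fin.insertNth_apply_succAbove, Fin.snoc_castSucc]

variable [Fintype α]

def partialTrace [AddCommMonoid R] (j : Fin (k + 1))
    (A : Matrix (Fin (k + 1) → α) (Fin (k + 1) → α) R) : Matrix (Fin k → α) (Fin k → α) R :=
  of fun x y => ∑ c, A (j.insertNth c x) (j.insertNth c y)

lemma partialTrace_one [DecidableEq α] [NonAssocSemiring R] (j : Fin (k + 1)) :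
    partialTrace j (1 : Matrix (Fin (k + 1) → α) (Fin (k + 1) → α) R) =
      (Fintype.card α : R) • 1 := by
  ext x y
  simp [partialTrace, one_apply]

variable [DecidableEq α] [AddCommMonoid R]

lemma partialTrace_castSucc_submatrix_blockDiagonal
    (M : α → Matrix (Fin (k + 1) → α) (Fin (k + 1) → α) R) (i : Fin (k + 1)) :
    partialTrace i.castSucc ((blockDiagonal M).submatrix snocSplit snocSplit) =
      (blockDiagonal fun a => partialTrace i (M a)).submatrix snocSplit snocSplit := by
  ext s t
  obtain ⟨⟨x, a⟩, rfl⟩ := snocSplit.symm.surjective s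
  obtain ⟨⟨y, b⟩, rfl⟩ := snocSplit.symm.surjective t
  simp only [partialTrace, submatrix_apply, of_apply, snocSplit_symm_apply,
    insertNth_castSucc_snoc, snocSplit_snoc, blockDiagonal_apply]
  split_ifs <;> simp

lemma partialTrace_last_submatrix_blockDiagonal (M : α → Matrix (Fin k → α) (Fin k → α) R) :
    partialTrace (Fin.last k) ((blockDiagonal M).submatrix snocSplit snocSplit) = ∑ a, M a := by
  ext x y
  simp [partialTrace, blockDiagonal_apply, Matrix.sum_apply]

end PartialTrace

lemma ctrlLast_eq_submatrix_blockDiagonal (n : ℕ)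
    (U' : Matrix (Fin n → Fin 2) (Fin n → Fin 2) ℂ) :
    ctrlLast n U' = (blockDiagonal ![1, U']).submatrix snocSplit snocSplit := by
  ext s t
  obtain ⟨⟨x, a⟩, rfl⟩ := snocSplit.symm.surjective s
  obtain ⟨⟨y, b⟩, rfl⟩ := snocSplit.symm.surjective t
  simp only [ctrlLast, blockDiagonal_apply, submatrix_apply, of_apply, snocSplit_symm_apply,
    snocSplit_snoc, Fin.snoc_last, Fin.snoc_castSucc]
  fin_cases a <;> fin_cases b <;> simp [one_apply]

lemma sum_fun_insertNth {α M : Type*} [Fintype α] [AddCommMonoid M] {k : ℕ} (j : Fin (k + 1))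
    (f : (Fin (k + 1) → α) → M) : ∑ r, f r = ∑ c, ∑ x, f (j.insertNth c x) := by
  rw [← (Fin.insertNthEquiv (fun _ => α) j).sum_comp, Fintype.sum_prod_type]
  rfl

lemma star_phi2_dotProduct_tensorId_phi2Proj_mulVec
    (E : Matrix (Fin 2) (Fin 2) ℂ → Matrix (Fin 2) (Fin 2) ℂ) :
    star phi2 ⬝ᵥ tensorId E phi2Proj *ᵥ phi2 = (∑ a, ∑ b, E (single a b 1) a b) / 4 := by
  have hsqrt : ((Real.sqrt 2 : ℝ) : ℂ) ^ 2 = 2 := by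
    rw [← Complex.ofReal_pow, Real.sq_sqrt (by norm_num)]
    norm_num
  simp only [dotProduct, mulVec, tensorId, phi2, phi2Proj, of_apply,
    Fintype.sum_prod_type, Fin.sum_univ_two, Pi.star_apply]
  norm_num
  have hinv : ((√2 : ℝ) : ℂ)⁻¹ * ((√2 : ℝ) : ℂ)⁻¹ = 1 / 2 := by
    rw [← mul_inv, ← sq, hsqrt, one_div]
  linear_combination (E (single 0 0 1) 0 0 + E (single 0 1 1) 0 1 + E (single 1 0 1) 1 0 +
    E (single 1 1 1) 1 1) / 2 * hinv

lemma Ej_single_apply_self {k : ℕ} (j : Fin (k + 1))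
    (W : Matrix (Fin (k + 1) → Fin 2) (Fin (k + 1) → Fin 2) ℂ) (a b : Fin 2) :
    Ej (k + 1) j W (single a b 1) a b =
      (∑ x, ∑ y, W (j.insertNth a x) (j.insertNth a y) *
        star (W (j.insertNth b x) (j.insertNth b y))) / 2 ^ k := by
  simp only [Ej, of_apply, sum_fun_insertNth j, Fin.update_insertNth, Fin.insertNth_apply_same,
    Fin.insertNth_inj, single_apply, true_and, ite_and, mul_ite, ite_mul, mul_one, mul_zero,
    zero_mul]
  simp only [Finset.sum_ite_eq, Finset.mem_univ, if_true, Finset.sum_ite_irrel,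
    Finset.sum_const_zero]
  rw [Finset.sum_const, Finset.card_univ, Fintype.card_fin, Nat.add_sub_cancel, nsmul_eq_mul]
  push_cast
  ring

lemma Fe_one_eq {k : ℕ} (j : Fin (k + 1))
    (U : Matrix (Fin (k + 1) → Fin 2) (Fin (k + 1) → Fin 2) ℂ) :
    Fe (k + 1) j U 1 = frobeniusNormSq (partialTrace j U) / 2 ^ (k + 2) := by
  have hsum : ∑ a, ∑ b, Ej (k + 1) j U (single a b 1) a b =
      (frobeniusNormSq (partialTrace j U) : ℂ) / 2 ^ k := by
    simp only [Ej_single_apply_self, ← Finset.sum_div]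
    congr 1
    simp only [frobeniusNormSq, partialTrace, of_apply, ofReal_sum, ← Complex.mul_conj,
      map_sum, Finset.sum_mul_sum, ← Complex.star_def]
    simp_rw [Finset.sum_comm (s := (Finset.univ : Finset (Fin 2)))
      (t := (Finset.univ : Finset (Fin k → Fin 2))) (β := ℂ)]
  rw [Fe, FeC, conjTranspose_one, mul_one, star_phi2_dotProduct_tensorId_phi2Proj_mulVec, hsum,
    show (frobeniusNormSq (partialTrace j U) : ℂ) / 2 ^ k / 4 =
      ((frobeniusNormSq (partialTrace j U) / 2 ^ (k + 2) : ℝ) : ℂ) by push_cast; ring,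
    ofReal_re]

section Controlled

variable {n : ℕ} {U' : Matrix (Fin n → Fin 2) (Fin n → Fin 2) ℂ}

lemma Fe_ctrlLast_castSucc (i : Fin n) :
    Fe (n + 1) i.castSucc (ctrlLast n U') 1 = (1 + Fe n i U' 1) / 2 := by
  obtain ⟨k, rfl⟩ := Nat.exists_eq_add_one_of_ne_zero i.pos.ne'
  have hblocks : partialTrace i.castSucc (ctrlLast (k + 1) U') =
      (blockDiagonal ![(2 : ℂ) • 1, partialTrace i U']).submatrix snocSplit snocSplit := by
    rw [ctrlLast_eq_submatrix_blockDiagonal, partialTrace_castSucc_submatrix_blockDiagonal]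
    congr
    ext a : 1
    fin_cases a <;> simp [partialTrace_one]
  rw [Fe_one_eq, Fe_one_eq, hblocks, frobeniusNormSq_submatrix, frobeniusNormSq_blockDiagonal,
    Fin.sum_univ_two]
  simp only [cons_val_zero, cons_val_one, cons_val_fin_one, frobeniusNormSq_smul_one,
    normSq_ofNat, Fintype.card_fun, Fintype.card_fin, Nat.cast_pow, Nat.cast_ofNat]
  field_simp
  ring

lemma Fe_ctrlLast_last (hU' : U' ∈ unitaryGroup (Fin n → Fin 2) ℂ) :
    Fe (n + 1) (Fin.last n) (ctrlLast n U') 1 = (1 + U'.trace.re / 2 ^ n) / 2 := by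
  rw [Fe_one_eq, ctrlLast_eq_submatrix_blockDiagonal, partialTrace_last_submatrix_blockDiagonal,
    Fin.sum_univ_two]
  simp only [cons_val_zero, cons_val_one, cons_val_fin_one,
    frobeniusNormSq_one_add_of_mem_unitaryGroup hU', Fintype.card_fun, Fintype.card_fin,
    Nat.cast_pow, Nat.cast_ofNat]
  field_simp
  ring

end Controlled

-- Also true for `m = 0`, where `CLHST 0 U V = 0` because `1 / 0 = 0` in `ℝ`.
lemma natCast_mul_one_sub_CLHST (m : ℕ) (U V : Matrix (Fin m → Fin 2) (Fin m → Fin 2) ℂ) :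
    (m : ℝ) * (1 - CLHST m U V) = ∑ j, Fe m j U V := by
  rcases m.eq_zero_or_pos with rfl | hm
  · simp
  · simp only [CLHST, CLHSTj, Finset.sum_sub_distrib, Finset.sum_const, Finset.card_univ,
      Fintype.card_fin, nsmul_eq_mul]
    field_simp
    ring

theorem stmt19_general (n : ℕ)
    (U' : Matrix (Fin n → Fin 2) (Fin n → Fin 2) ℂ)
    (hU' : U' ∈ Matrix.unitaryGroup (Fin n → Fin 2) ℂ) :
    (U'.trace).re =
      2 ^ n * (((n : ℝ) + 1) * (2 * (1 - CLHST (n + 1) (ctrlLast n U') 1) - 1) -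
        (n : ℝ) * (1 - CLHST n U' 1)) := by
  have hB₁ := natCast_mul_one_sub_CLHST n U' 1
  have hB₂ := natCast_mul_one_sub_CLHST (n + 1) (ctrlLast n U') 1
  rw [Fin.sum_univ_castSucc, Fe_ctrlLast_last hU'] at hB₂
  simp only [Fe_ctrlLast_castSucc, ← Finset.sum_div, Finset.sum_add_distrib, Finset.sum_const,
    Finset.card_univ, Fintype.card_fin, nsmul_eq_mul, mul_one, ← hB₁] at hB₂
  push_cast at hB₂
  have htrace : (2 : ℝ) ^ n * (U'.trace.re / 2 ^ n) = U'.trace.re :=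
    mul_div_cancel₀ _ (pow_ne_zero n two_ne_zero)
  linear_combination (-2 * 2 ^ n) * hB₂ - htrace

/-- For a unitary `U'` on `n ≥ 1` qubits, setting `U₁ = U'` and `U₂`
the controlled-`U'` on `n + 1` qubits (last qubit the control), and
`B(U₁) = 1 − C_LHST(U₁, I)`, `B(U₂) = 1 − C_LHST(U₂, I)`:
`Re(Tr U') = 2^n ((n+1)(2B(U₂) − 1) − n·B(U₁))`. -/
theorem stmt19 (n : ℕ) (hn : 1 ≤ n)
    (U' : Matrix (Fin n → Fin 2) (Fin n → Fin 2) ℂ)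
    (hU' : U' ∈ Matrix.unitaryGroup (Fin n → Fin 2) ℂ) :
    (U'.trace).re =
      2 ^ n * (((n : ℝ) + 1) * (2 * (1 - CLHST (n + 1) (ctrlLast n U') 1) - 1) -
        (n : ℝ) * (1 - CLHST n U' 1)) :=
  stmt19_general n U' hU'

end
end
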